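/- arXiv:math/0612487 — 4 statements merged into one kernel-verified Lean document; each statement's English description precedes it below -/
import Mathlib

section
/- Under the assumptions of the previous statement and additionally assuming ‖p‖ = ‖q‖ = 1 and max{‖ax‖_J, ‖xa‖_J} ≤ ‖x‖_J‖a‖ for all x ∈ J and a ∈ A, the norm ‖a‖₁′ := ‖a‖ + ‖paq‖_J on L₁ = {a ∈ L : p·a·q ∈ J} is a Banach algebra norm: ‖e‖₁′ = 1 and ‖ab‖₁′ ≤ ‖a‖₁′‖b‖₁′ for all a, b ∈ L₁. -/
/-- Under the assumptions of the previous statement, with in addition `‖p‖ = ‖q‖ = 1` and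
`max{nJ(a*x), nJ(x*a)} ≤ nJ x * ‖a‖` for `x ∈ J`, `a ∈ A`, the norm
`N a = ‖a‖ + nJ (p*a*q)` on `L₁ = {a ∈ L : p*a*q ∈ J}` is a Banach algebra norm:
`N 1 = 1` and `N (a*b) ≤ N a * N b` for all `a, b ∈ L₁`. -/
theorem krein_L1_banach_algebra_norm (A : Type*) [NormedRing A] [NormOneClass A]
    [NormedAlgebra ℂ A] [CompleteSpace A]
    (J : Set A) (hJ0 : (0 : A) ∈ J)
    (hJ_ideal : ∀ a : A, ∀ x ∈ J, a * x ∈ J ∧ x * a ∈ J)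
    (hJ_add : ∀ x ∈ J, ∀ y ∈ J, x + y ∈ J)
    (nJ : A → ℝ)
    (hnJ_dom : ∀ x ∈ J, ‖x‖ ≤ nJ x)
    (hnJ_add : ∀ x ∈ J, ∀ y ∈ J, nJ (x + y) ≤ nJ x + nJ y)
    (hnJ_mul : ∀ x ∈ J, ∀ a : A, nJ (a * x) ≤ ‖a‖ * nJ x ∧ nJ (x * a) ≤ nJ x * ‖a‖)
    (p : A) (hp : p * p = p) (q : A) (hq : q = 1 - p)
    (hpnorm : ‖p‖ = 1) (hqnorm : ‖q‖ = 1)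
    (L : Subalgebra ℂ A) (hL : IsClosed (L : Set A))
    (N : A → ℝ) (hN : ∀ a : A, N a = ‖a‖ + nJ (p * a * q)) :
    N 1 = 1 ∧
    ∀ a b : A, (a ∈ L ∧ p * a * q ∈ J) → (b ∈ L ∧ p * b * q ∈ J) →
      N (a * b) ≤ N a * N b := by
  -- nJ 0 = 0
  have hnJ0 : nJ (0 : A) = 0 := by
    have h1 := (hnJ_mul 0 hJ0 0).1
    simp at h1
    have h2 := hnJ_dom 0 hJ0
    simp at h2
    linarith
  have hnJ_nonneg : ∀ x ∈ J, 0 ≤ nJ x := fun x hx =>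
    le_trans (norm_nonneg x) (hnJ_dom x hx)
  have hq2 : q * q = q := by
    subst hq
    have : (1 - p) * (1 - p) = 1 - p - p + p * p := by noncomm_ring
    rw [this, hp]; abel
  have hpq : p * q = 0 := by
    subst hq
    have : p * (1 - p) = p - p * p := by noncomm_ring
    rw [this, hp]; abel
  have hpq1 : p + q = 1 := by rw [hq]; abel
  constructor
  · rw [hN 1, mul_one, hpq, hnJ0, norm_one]; ring
  · rintro a b ⟨-, haJ⟩ ⟨-, hbJ⟩
    -- key identity
    have key : p * (a * b) * q = (p * a * p) * (p * b * q) + (p * a * q) * (q * b * q) := by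
      have e1 : (p * a * p) * (p * b * q) + (p * a * q) * (q * b * q)
          = p * a * (p * p) * (b * q) + p * a * (q * q) * (b * q) := by noncomm_ring
      rw [e1, hp, hq2]
      have e2 : p * a * p * (b * q) + p * a * q * (b * q) = p * a * (p + q) * (b * q) := by
        noncomm_ring
      rw [e2, hpq1]
      noncomm_ring
    have m1 : (p * a * p) * (p * b * q) ∈ J := (hJ_ideal (p * a * p) _ hbJ).1
    have m2 : (p * a * q) * (q * b * q) ∈ J := (hJ_ideal (q * b * q) _ haJ).2
    have hpap : ‖p * a * p‖ ≤ ‖a‖ := by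
      calc ‖p * a * p‖ ≤ ‖p * a‖ * ‖p‖ := norm_mul_le _ _
        _ ≤ ‖p‖ * ‖a‖ * ‖p‖ := by gcongr; exact norm_mul_le _ _
        _ = ‖a‖ := by rw [hpnorm]; ring
    have hqbq : ‖q * b * q‖ ≤ ‖b‖ := by
      calc ‖q * b * q‖ ≤ ‖q * b‖ * ‖q‖ := norm_mul_le _ _
        _ ≤ ‖q‖ * ‖b‖ * ‖q‖ := by gcongr; exact norm_mul_le _ _
        _ = ‖b‖ := by rw [hqnorm]; ring
    have h1 : nJ ((p * a * p) * (p * b * q)) ≤ ‖a‖ * nJ (p * b * q) := by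
      calc nJ ((p * a * p) * (p * b * q)) ≤ ‖p * a * p‖ * nJ (p * b * q) :=
            (hnJ_mul _ hbJ _).1
        _ ≤ ‖a‖ * nJ (p * b * q) := by
            apply mul_le_mul_of_nonneg_right hpap (hnJ_nonneg _ hbJ)
    have h2 : nJ ((p * a * q) * (q * b * q)) ≤ nJ (p * a * q) * ‖b‖ := by
      calc nJ ((p * a * q) * (q * b * q)) ≤ nJ (p * a * q) * ‖q * b * q‖ :=
            (hnJ_mul _ haJ _).2
        _ ≤ nJ (p * a * q) * ‖b‖ := by
            apply mul_le_mul_of_nonneg_left hqbq (hnJ_nonneg _ haJ)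
    have hsum : nJ (p * (a * b) * q) ≤ ‖a‖ * nJ (p * b * q) + nJ (p * a * q) * ‖b‖ := by
      rw [key]
      calc nJ ((p * a * p) * (p * b * q) + (p * a * q) * (q * b * q))
          ≤ nJ ((p * a * p) * (p * b * q)) + nJ ((p * a * q) * (q * b * q)) :=
            hnJ_add _ m1 _ m2
        _ ≤ ‖a‖ * nJ (p * b * q) + nJ (p * a * q) * ‖b‖ := add_le_add h1 h2
    rw [hN (a * b), hN a, hN b]
    have hab : ‖a * b‖ ≤ ‖a‖ * ‖b‖ := norm_mul_le a b
    have hcross : 0 ≤ nJ (p * a * q) * nJ (p * b * q) :=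
      mul_nonneg (hnJ_nonneg _ haJ) (hnJ_nonneg _ hbJ)
    nlinarith [hsum, hab, hcross, norm_nonneg a, norm_nonneg b,
      hnJ_nonneg _ haJ, hnJ_nonneg _ hbJ]
end

section
/- Let X be a Banach space, P, Q = I − P complementary bounded projections on X, J₁, J₂ two-sided (not necessarily closed) ideals of B(X) with C₀(X) ⊆ Jᵢ ⊆ C_∞(X) (finite-rank ⊆ Jᵢ ⊆ compact), and L a subalgebra of B(X). If A ∈ L satisfies P A Q ∈ J₁ and Q A P ∈ J₂, and A is invertible in B(X), then P A⁻¹ Q ∈ J₁ and Q A⁻¹ P ∈ J₂. -/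
/-!
Let `K = PA(1 - P) + (1 - P)AP` be the off-diagonal part of `A`. A direct computation gives
`PB(1 - P) (1 - KB) = -PB · PA(1 - P) · B ∈ J₁`, and the same with `P` and `1 - P` exchanged.
Since `KB` is compact, `1 - KB` has a right inverse modulo finite-rank operators, and these lie
in `J₁` and `J₂`; hence `PB(1 - P) ∈ J₁` and `(1 - P)BP ∈ J₂`.

To find that right inverse, perturb `1 - T` (`T` compact) by `j ∘ π`, where `π` projects onto
the finite-dimensional space `ker (1 - T)` and `j` maps it injectively or surjectively into an
algebraic complement of `range (1 - T)`. The perturbed operator is then injective, hence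
invertible by the Fredholm alternative, or surjective; in both cases it has a continuous right
inverse, since its kernel is finite-dimensional.
-/

open Function

universe u v

theorem LinearMap.exists_injective_or_surjective (K : Type*) (V : Type u) (W : Type v)
    [DivisionRing K] [AddCommGroup V] [Module K V] [AddCommGroup W] [Module K W] :
    ∃ f : V →ₗ[K] W, Injective f ∨ Surjective f := by
  rcases le_total (Cardinal.lift.{v} (Module.rank K V)) (Cardinal.lift.{u} (Module.rank K W))
    with h | h
  · obtain ⟨f, hf⟩ := lift_rank_le_iff_exists_linearMap.mp h
    exact ⟨f, .inl hf⟩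
  · obtain ⟨g, hg⟩ := lift_rank_le_iff_exists_linearMap.mp h
    obtain ⟨f, hfg⟩ := g.exists_leftInverse_of_injective (LinearMap.ker_eq_bot.mpr hg)
    exact ⟨f, .inr fun w => ⟨g w, LinearMap.congr_fun hfg w⟩⟩

namespace LinearMap

variable {K V W : Type*} [Ring K] [AddCommGroup V] [Module K V] [AddCommGroup W] [Module K W]
  {S : V →ₗ[K] W} {π : V →ₗ[K] ker S} {j : ker S →ₗ[K] W}

theorem injective_sub_comp_of_injective_mkQ_comp (hπ : ∀ n : ker S, π n = n)
    (hj : Injective ((range S).mkQ ∘ₗ j)) : Injective (S - j ∘ₗ π) := by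
  rw [← ker_eq_bot, ker_eq_bot']
  intro x hx
  have hSx : S x = j (π x) := sub_eq_zero.mp hx
  have hπx : π x = 0 := hj <| by
    rw [map_zero, comp_apply, ← hSx]
    exact (Submodule.Quotient.mk_eq_zero _).mpr (mem_range_self S x)
  have hxN : x ∈ ker S := by rw [mem_ker, hSx, hπx, map_zero]
  simpa [hπx] using (hπ ⟨x, hxN⟩).symm

theorem surjective_sub_comp_of_surjective_mkQ_comp (hπ : ∀ n : ker S, π n = n)
    (hj : Surjective ((range S).mkQ ∘ₗ j)) : Surjective (S - j ∘ₗ π) := by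
  intro y
  obtain ⟨n, hn⟩ := hj (-(range S).mkQ y)
  have hmem : y + j n ∈ range S := by
    rw [← Submodule.Quotient.mk_eq_zero, ← Submodule.mkQ_apply, map_add, ← comp_apply, hn,
      add_neg_cancel]
  obtain ⟨x, hx⟩ := hmem
  refine ⟨x - π x + n, ?_⟩
  have hπ' : π (x - π x + n) = n := by simp [hπ]
  have hS' : S (x - π x + n) = S x := by
    simp [show S (π x) = 0 from (π x).2, show S n = 0 from n.2]
  rw [sub_apply, comp_apply, hπ', hS', hx, add_sub_cancel_right]

end LinearMap

theorem ContinuousLinearMap.HasRightInverse.of_surjective_of_finiteDimensional_ker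
    {𝕜 E F : Type*} [RCLike 𝕜] [NormedAddCommGroup E] [NormedSpace 𝕜 E] [CompleteSpace E]
    [NormedAddCommGroup F] [NormedSpace 𝕜 F] [CompleteSpace F] {S : E →L[𝕜] F}
    [FiniteDimensional 𝕜 (LinearMap.ker (S : E →ₗ[𝕜] F))] (hS : Surjective S) :
    S.HasRightInverse := by
  obtain ⟨M, hMc, hM⟩ :=
    (Submodule.ClosedComplemented.of_finiteDimensional
      (LinearMap.ker (S : E →ₗ[𝕜] F))).exists_isClosed_isCompl
  have : CompleteSpace M := hMc.completeSpace_coe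
  let f : M →L[𝕜] F := S ∘L M.subtypeL
  have hker : LinearMap.ker (f : M →ₗ[𝕜] F) = ⊥ := by
    rw [LinearMap.ker_eq_bot']
    intro m hm
    exact Subtype.ext (Submodule.disjoint_def.mp hM.disjoint m hm m.2)
  have hrange : LinearMap.range (f : M →ₗ[𝕜] F) = ⊤ := by
    refine LinearMap.range_eq_top.mpr fun y => ?_
    obtain ⟨x, rfl⟩ := hS y
    obtain ⟨n, hn, m, hm, rfl⟩ :=
      Submodule.mem_sup.mp (hM.sup_eq_top ▸ Submodule.mem_top (x := x))
    exact ⟨⟨m, hm⟩, by simp [f, show S n = 0 from hn]⟩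
  let e := ContinuousLinearEquiv.ofBijective f hker hrange
  exact ⟨M.subtypeL ∘L (e.symm : F →L[𝕜] M), e.apply_symm_apply⟩

namespace IsCompactOperator

section

variable {𝕜 X : Type*} [NontriviallyNormedField 𝕜] [NormedAddCommGroup X] [NormedSpace 𝕜 X]
  {T : X →L[𝕜] X}

theorem finiteDimensional_ker_one_sub [CompleteSpace 𝕜] (hT : IsCompactOperator T) :
    FiniteDimensional 𝕜 (LinearMap.ker ((1 - T : X →L[𝕜] X) : X →ₗ[𝕜] X)) := by
  have hfix : ∀ x ∈ LinearMap.ker ((1 - T : X →L[𝕜] X) : X →ₗ[𝕜] X), T x = x :=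
    fun x hx => (sub_eq_zero.mp hx).symm
  have hmaps : ∀ x ∈ LinearMap.ker ((1 - T : X →L[𝕜] X) : X →ₗ[𝕜] X),
      (T : X →ₗ[𝕜] X) x ∈ LinearMap.ker ((1 - T : X →L[𝕜] X) : X →ₗ[𝕜] X) :=
    fun x hx => by rwa [ContinuousLinearMap.coe_coe, hfix x hx]
  have h := hT.restrict hmaps (ContinuousLinearMap.isClosed_ker _)
  rw [show ((T : X →ₗ[𝕜] X).restrict hmaps : _ → _) = id from
    funext fun x => Subtype.ext (hfix x x.2)] at h
  exact FiniteDimensional.of_isCompactOperator_id h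

theorem surjective_one_sub_of_injective [CompleteSpace X] (hT : IsCompactOperator T)
    (hinj : Injective (1 - T : X →L[𝕜] X)) : Surjective (1 - T : X →L[𝕜] X) := by
  rcases hT.hasEigenvalue_or_mem_resolventSet one_ne_zero with h | h
  · obtain ⟨x, hx⟩ := h.exists_hasEigenvector
    have hTx : T x = x := by simpa using hx.apply_eq_smul
    exact absurd (hinj (by simp [hTx])) hx.2
  · rw [spectrum.mem_resolventSet_iff, map_one, ContinuousLinearMap.isUnit_iff_bijective] at h
    exact h.2

end

section

variable {𝕜 X : Type*} [RCLike 𝕜] [NormedAddCommGroup X] [NormedSpace 𝕜 X]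
  [CompleteSpace X] {T : X →L[𝕜] X}

theorem exists_finiteRank_surjective_one_sub_add (hT : IsCompactOperator T) :
    ∃ F : X →L[𝕜] X, IsCompactOperator F ∧
      FiniteDimensional 𝕜 (LinearMap.range (F : X →ₗ[𝕜] X)) ∧
      Surjective (1 - (T + F) : X →L[𝕜] X) := by
  set S : X →ₗ[𝕜] X := ((1 - T : X →L[𝕜] X) : X →ₗ[𝕜] X)
  have : FiniteDimensional 𝕜 (LinearMap.ker S) := hT.finiteDimensional_ker_one_sub
  obtain ⟨π, hπ⟩ := Submodule.ClosedComplemented.of_finiteDimensional (LinearMap.ker S)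
  obtain ⟨ψ, hψ⟩ :=
    LinearMap.exists_injective_or_surjective 𝕜 (LinearMap.ker S) (X ⧸ S.range)
  obtain ⟨σ, hσ⟩ := S.range.mkQ.exists_rightInverse_of_surjective S.range.range_mkQ
  let j : LinearMap.ker S →L[𝕜] X := LinearMap.toContinuousLinearMap (σ ∘ₗ ψ)
  have hj : S.range.mkQ ∘ₗ (j : LinearMap.ker S →ₗ[𝕜] X) = ψ := by
    rw [LinearMap.coe_toContinuousLinearMap, ← LinearMap.comp_assoc, hσ, LinearMap.id_comp]
  have hj_cpt : IsCompactOperator j :=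
    (isCompactOperator_id_iff_finiteDimensional.mpr ‹_›).clm_comp j
  have hF : IsCompactOperator (j ∘L π) := hj_cpt.comp_clm π
  refine ⟨j ∘L π, hF, ?_, ?_⟩
  · refine Submodule.finiteDimensional_of_le
      (S₂ := LinearMap.range (j : LinearMap.ker S →ₗ[𝕜] X)) ?_
    rintro _ ⟨x, rfl⟩
    exact ⟨π x, rfl⟩
  rcases hψ with hinj | hsurj
  · refine surjective_one_sub_of_injective (hT.add hF) ?_
    rw [sub_add_eq_sub_sub]
    exact LinearMap.injective_sub_comp_of_injective_mkQ_comp hπ (hj ▸ hinj)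
  · rw [sub_add_eq_sub_sub]
    exact LinearMap.surjective_sub_comp_of_surjective_mkQ_comp hπ (hj ▸ hsurj)

theorem exists_rightQuasiInverse_one_sub (hT : IsCompactOperator T) :
    ∃ G F : X →L[𝕜] X, FiniteDimensional 𝕜 (LinearMap.range (F : X →ₗ[𝕜] X)) ∧
      (1 - T) * G = 1 - F := by
  obtain ⟨F, hF, hF_fin, hsurj⟩ := hT.exists_finiteRank_surjective_one_sub_add
  have := finiteDimensional_ker_one_sub (T := T + F) (hT.add hF)
  obtain ⟨G, hG⟩ :=
    ContinuousLinearMap.HasRightInverse.of_surjective_of_finiteDimensional_ker hsurj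
  have hG' : (1 - (T + F)) * G = 1 := ContinuousLinearMap.ext hG
  refine ⟨G, -(F * G), ?_, ?_⟩
  · refine Submodule.finiteDimensional_of_le (S₂ := LinearMap.range (F : X →ₗ[𝕜] X)) ?_
    rintro _ ⟨x, rfl⟩
    exact ⟨-G x, by simp⟩
  · calc (1 - T) * G = (1 - (T + F)) * G + F * G := by noncomm_ring
      _ = 1 - -(F * G) := by rw [hG', sub_neg_eq_add]

end

end IsCompactOperator

section OffDiagonal

variable {R : Type*} [Ring R]

theorem TwoSidedIdeal.exists_coe_eq_of_add_mem_of_mul_mem (J : Set R) (zero_mem : 0 ∈ J)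
    (add_mem : ∀ s ∈ J, ∀ t ∈ J, s + t ∈ J)
    (mul_mem : ∀ s, ∀ t ∈ J, s * t ∈ J ∧ t * s ∈ J) :
    ∃ I : TwoSidedIdeal R, (I : Set R) = J :=
  ⟨.mk' J zero_mem (add_mem _ · _ ·) (fun {t} ht => by simpa using (mul_mem (-1) t ht).1)
    (fun {s t} ht => (mul_mem s t ht).1) (fun {t s} ht => (mul_mem s t ht).2),
    Set.ext fun _ => TwoSidedIdeal.mem_mk' ..⟩

theorem TwoSidedIdeal.mem_of_mul_mem_of_mul_eq_one_sub {I : TwoSidedIdeal R} {t s g f : R}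
    (hts : t * s ∈ I) (hsg : s * g = 1 - f) (hf : f ∈ I) : t ∈ I := by
  have ht : t = t * s * g + t * f := by rw [mul_assoc, hsg]; noncomm_ring
  rw [ht]
  exact I.add_mem (I.mul_mem_right _ _ hts) (I.mul_mem_left _ _ hf)

def offDiagonal (p a : R) : R := p * a * (1 - p) + (1 - p) * a * p

theorem offDiagonal_one_sub (p a : R) : offDiagonal (1 - p) a = offDiagonal p a := by
  rw [offDiagonal, offDiagonal, sub_sub_cancel, add_comm]

theorem corner_mul_one_sub_offDiagonal_mul {p a b : R} (hp : IsIdempotentElem p)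
    (hab : a * b = 1) (hba : b * a = 1) :
    p * b * (1 - p) * (1 - offDiagonal p a * b) = -(p * b * (p * a * (1 - p)) * b) := by
  have hp' : ∀ x, p * (p * x) = p * x := fun x => by rw [← mul_assoc, hp.eq]
  have hba' : ∀ x, b * (a * x) = x := fun x => by rw [← mul_assoc, hba, one_mul]
  simp only [offDiagonal, mul_add, add_mul, mul_sub, sub_mul, mul_one, one_mul, mul_assoc,
    hp.eq, hab, hp', hba', neg_sub]
  abel

theorem corner_mem_of_offDiagonal {I : TwoSidedIdeal R} {p a b g f : R} (hp : IsIdempotentElem p)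
    (hab : a * b = 1) (hba : b * a = 1) (ha : p * a * (1 - p) ∈ I)
    (hg : (1 - offDiagonal p a * b) * g = 1 - f) (hf : f ∈ I) : p * b * (1 - p) ∈ I := by
  refine TwoSidedIdeal.mem_of_mul_mem_of_mul_eq_one_sub ?_ hg hf
  rw [corner_mul_one_sub_offDiagonal_mul hp hab hba]
  exact I.neg_mem (I.mul_mem_right _ _ (I.mul_mem_left _ _ ha))

end OffDiagonal

theorem inverse_offdiagonal_in_ideal_general (X : Type*) [NormedAddCommGroup X]
    [NormedSpace ℂ X] [CompleteSpace X]
    (J₁ J₂ : Set (X →L[ℂ] X))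
    (hJ₁fin : ∀ T : X →L[ℂ] X,
      FiniteDimensional ℂ (LinearMap.range (T : X →ₗ[ℂ] X)) → T ∈ J₁)
    (hJ₁cpt : ∀ T ∈ J₁, IsCompactOperator T)
    (hJ₁add : ∀ S ∈ J₁, ∀ T ∈ J₁, S + T ∈ J₁)
    (hJ₁ideal : ∀ (S : X →L[ℂ] X), ∀ T ∈ J₁, S ∘L T ∈ J₁ ∧ T ∘L S ∈ J₁)
    (hJ₂fin : ∀ T : X →L[ℂ] X,
      FiniteDimensional ℂ (LinearMap.range (T : X →ₗ[ℂ] X)) → T ∈ J₂)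
    (hJ₂cpt : ∀ T ∈ J₂, IsCompactOperator T)
    (hJ₂add : ∀ S ∈ J₂, ∀ T ∈ J₂, S + T ∈ J₂)
    (hJ₂ideal : ∀ (S : X →L[ℂ] X), ∀ T ∈ J₂, S ∘L T ∈ J₂ ∧ T ∘L S ∈ J₂)
    (L : Subalgebra ℂ (X →L[ℂ] X))
    (P : X →L[ℂ] X) (hP : P ∘L P = P) (Q : X →L[ℂ] X) (hQ : Q = 1 - P)
    (A : X →L[ℂ] X)
    (h₁ : P ∘L A ∘L Q ∈ J₁) (h₂ : Q ∘L A ∘L P ∈ J₂)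
    (B : X →L[ℂ] X) (hAB : A ∘L B = 1) (hBA : B ∘L A = 1) :
    P ∘L B ∘L Q ∈ J₁ ∧ Q ∘L B ∘L P ∈ J₂ := by
  subst hQ
  simp only [← ContinuousLinearMap.mul_def, ← mul_assoc] at hP hAB hBA h₁ h₂ ⊢
  replace hP : IsIdempotentElem P := hP
  have hK : IsCompactOperator (offDiagonal P A * B) :=
    ((hJ₁cpt _ h₁).add (hJ₂cpt _ h₂)).comp_clm B
  obtain ⟨G, F, hF, hGF⟩ := hK.exists_rightQuasiInverse_one_sub
  have h₀ : FiniteDimensional ℂ (LinearMap.range ((0 : X →L[ℂ] X) : X →ₗ[ℂ] X)) := by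
    rw [ContinuousLinearMap.toLinearMap_zero, LinearMap.range_zero]
    infer_instance
  obtain ⟨I₁, rfl⟩ :=
    TwoSidedIdeal.exists_coe_eq_of_add_mem_of_mul_mem J₁ (hJ₁fin 0 h₀) hJ₁add hJ₁ideal
  obtain ⟨I₂, rfl⟩ :=
    TwoSidedIdeal.exists_coe_eq_of_add_mem_of_mul_mem J₂ (hJ₂fin 0 h₀) hJ₂add hJ₂ideal
  constructor
  · exact corner_mem_of_offDiagonal hP hAB hBA h₁ hGF (hJ₁fin F hF)
  · have h₂' : (1 - P) * A * (1 - (1 - P)) ∈ I₂ := by rwa [sub_sub_cancel]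
    simpa using corner_mem_of_offDiagonal hP.one_sub hAB hBA h₂'
      (by rwa [offDiagonal_one_sub]) (hJ₂fin F hF)

/-- Let `X` be a Banach space, `P, Q = I - P` complementary bounded projections on `X`,
`J₁, J₂` two-sided (not necessarily closed) ideals of `B(X)` with
finite-rank ⊆ `Jᵢ` ⊆ compact, and `L` a subalgebra of `B(X)`.  If `A ∈ L` satisfies
`P A Q ∈ J₁` and `Q A P ∈ J₂`, and `A` is invertible in `B(X)` with inverse `B`, then
`P B Q ∈ J₁` and `Q B P ∈ J₂`. -/
theorem inverse_offdiagonal_in_ideal (X : Type*) [NormedAddCommGroup X]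
    [NormedSpace ℂ X] [CompleteSpace X]
    (J₁ J₂ : Set (X →L[ℂ] X))
    (hJ₁fin : ∀ T : X →L[ℂ] X,
      FiniteDimensional ℂ (LinearMap.range (T : X →ₗ[ℂ] X)) → T ∈ J₁)
    (hJ₁cpt : ∀ T ∈ J₁, IsCompactOperator T)
    (hJ₁add : ∀ S ∈ J₁, ∀ T ∈ J₁, S + T ∈ J₁)
    (hJ₁ideal : ∀ (S : X →L[ℂ] X), ∀ T ∈ J₁, S ∘L T ∈ J₁ ∧ T ∘L S ∈ J₁)
    (hJ₂fin : ∀ T : X →L[ℂ] X,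
      FiniteDimensional ℂ (LinearMap.range (T : X →ₗ[ℂ] X)) → T ∈ J₂)
    (hJ₂cpt : ∀ T ∈ J₂, IsCompactOperator T)
    (hJ₂add : ∀ S ∈ J₂, ∀ T ∈ J₂, S + T ∈ J₂)
    (hJ₂ideal : ∀ (S : X →L[ℂ] X), ∀ T ∈ J₂, S ∘L T ∈ J₂ ∧ T ∘L S ∈ J₂)
    (L : Subalgebra ℂ (X →L[ℂ] X))
    (P : X →L[ℂ] X) (hP : P ∘L P = P) (Q : X →L[ℂ] X) (hQ : Q = 1 - P)
    (A : X →L[ℂ] X) (hAL : A ∈ L)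
    (h₁ : P ∘L A ∘L Q ∈ J₁) (h₂ : Q ∘L A ∘L P ∈ J₂)
    (B : X →L[ℂ] X) (hAB : A ∘L B = 1) (hBA : B ∘L A = 1) :
    P ∘L B ∘L Q ∈ J₁ ∧ Q ∘L B ∘L P ∈ J₂ :=
  inverse_offdiagonal_in_ideal_general X J₁ J₂ hJ₁fin hJ₁cpt hJ₁add hJ₁ideal hJ₂fin hJ₂cpt hJ₂add
    hJ₂ideal L P hP Q hQ A h₁ h₂ B hAB hBA
end

section
/- Let X be a Banach space, P a bounded projection on X with Q = I − P, and J a two-sided ideal of B(X) with C₀(X) ⊆ J ⊆ C_∞(X). If A ∈ B(X) is invertible, P A Q ∈ J, and the compression P A P restricted to the range of P is a Fredholm operator on PX, then P A⁻¹ Q ∈ J. -/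
/-!
Put `K = R(PAP) - P`. Since `R` is a left regularizer of `PAP`, `K` is compact, so `1 + K` is
Fredholm (the identity is a compact operator on the kernel and on the cokernel of `1 + K`, and
`1 + K` is bounded below on a complement of its kernel) and has a left inverse `S` modulo finite-rank
operators. The `(P, Q)` block of `AB = 1` reads `PAP · PBQ = -PAQ · BQ`, so
`(1 + K) PBQ = -R (PAQ · BQ) ∈ J`, and then `PBQ = S (1 + K) PBQ - (S (1 + K) - 1) PBQ ∈ J`.
-/

open Filter Topology

theorem TwoSidedIdeal.mem_of_mul_mem_of_mul_sub_one_mem {R : Type*} [Ring R]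
    {I : TwoSidedIdeal R} {S T V : R} (hST : S * T - 1 ∈ I) (hTV : T * V ∈ I) : V ∈ I := by
  have hV : V = S * (T * V) - (S * T - 1) * V := by noncomm_ring
  rw [hV]
  exact I.sub_mem (I.mul_mem_left _ _ hTV) (I.mul_mem_right _ _ hST)

theorem IsCompactOperator.of_comp_isOpenMap {X Y Z : Type*} [Zero X] [Zero Y]
    [TopologicalSpace X] [TopologicalSpace Y] [TopologicalSpace Z] {g : Y → Z} {q : X → Y}
    (hq : IsOpenMap q) (hq₀ : q 0 = 0) (h : IsCompactOperator (g ∘ q)) :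
    IsCompactOperator g := by
  obtain ⟨C, hC, hmem⟩ := h
  refine ⟨C, hC, Filter.mem_of_superset (hq₀ ▸ hq.image_mem_nhds hmem) ?_⟩
  rintro _ ⟨x, hx, rfl⟩
  exact hx

section NontriviallyNormedField

variable {𝕜 X : Type*} [NontriviallyNormedField 𝕜] [CompleteSpace 𝕜]
  [NormedAddCommGroup X] [NormedSpace 𝕜 X] {K : X →L[𝕜] X}

theorem IsCompactOperator.finiteDimensional_ker_one_add (hK : IsCompactOperator K) :
    FiniteDimensional 𝕜 (1 + K).ker := by
  have hmaps : ∀ x ∈ (1 + K).ker, K x ∈ (1 + K).ker := fun x hx => by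
    have hKx : K x = -x := eq_neg_of_add_eq_zero_right hx
    exact hKx ▸ neg_mem hx
  have hid : (id : (1 + K).ker → (1 + K).ker) = -((K : X →ₗ[𝕜] X).restrict hmaps) := by
    ext ⟨x, hx⟩
    exact eq_neg_of_add_eq_zero_left hx
  refine .of_isCompactOperator_id ?_
  rw [hid]
  exact (hK.restrict hmaps (ContinuousLinearMap.isClosed_ker _)).neg

theorem IsCompactOperator.finiteDimensional_quotient_range_one_add (hK : IsCompactOperator K)
    [IsClosed ((1 + K).range : Set X)] : FiniteDimensional 𝕜 (X ⧸ (1 + K).range) := by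
  set R := (1 + K).range
  have hmkQ : (R.mkQ : X → X ⧸ R) = -(R.mkQ ∘ K) := by
    ext x
    have : R.mkQ (x + K x) = 0 := (Submodule.Quotient.mk_eq_zero R).2 ⟨x, rfl⟩
    simpa [eq_neg_iff_add_eq_zero] using this
  refine .of_isCompactOperator_id (IsCompactOperator.of_comp_isOpenMap (q := R.mkQ)
    R.isOpenQuotientMap_mkQ.isOpenMap (map_zero _) ?_)
  rw [Function.id_comp, hmkQ]
  exact (hK.continuous_comp R.continuous_mkQ).neg

end NontriviallyNormedField

section RCLike

variable {𝕜 X : Type*} [RCLike 𝕜] [NormedAddCommGroup X] [NormedSpace 𝕜 X] {K : X →L[𝕜] X}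

theorem IsCompactOperator.exists_antilipschitzWith_one_add_domRestrict
    (hK : IsCompactOperator K) {M : Submodule 𝕜 X} (hM : IsClosed (M : Set X))
    (hMK : Disjoint M (1 + K).ker) : ∃ c, AntilipschitzWith c ((1 + K).domRestrict M) := by
  rw [antilipschitzWith_iff_exists_mul_le_norm]
  by_contra! h
  have hunit : ∀ n : ℕ, ∃ x ∈ M, ‖x‖ = 1 ∧ ‖(1 + K) x‖ < 1 / (n + 1) := fun n => by
    obtain ⟨⟨x, hxM⟩, hx⟩ := h (1 / (n + 1)) (by positivity)
    change ‖(1 + K) x‖ < 1 / (n + 1) * ‖x‖ at hx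
    have hx₀ : 0 < ‖x‖ := norm_pos_iff.2 fun h₀ => by simp [h₀] at hx
    refine ⟨(‖x‖⁻¹ : 𝕜) • x, M.smul_mem _ hxM, by simp [norm_smul, hx₀.ne'], ?_⟩
    rwa [map_smul, norm_smul, norm_inv, RCLike.norm_ofReal, abs_norm, inv_mul_lt_iff₀ hx₀,
      mul_comm]
  choose u huM hu₁ hTu using hunit
  obtain ⟨C, hC, hKC⟩ := hK.image_closedBall_subset_compact 1
  obtain ⟨y, -, φ, hφ, hKu⟩ := hC.tendsto_subseq (fun n => hKC ⟨u n, by simp [hu₁], rfl⟩)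
  have hTu₀ : Tendsto (fun n => (1 + K) (u (φ n))) atTop (𝓝 0) :=
    (squeeze_zero_norm (fun n => (hTu n).le) tendsto_one_div_add_atTop_nhds_zero_nat).comp
      hφ.tendsto_atTop
  have hu : Tendsto (fun n => u (φ n)) atTop (𝓝 (-y)) := by
    simpa using hTu₀.sub hKu
  have hyM : -y ∈ M := hM.mem_of_tendsto hu (Eventually.of_forall fun n => huM (φ n))
  have hy₁ : ‖-y‖ = 1 := tendsto_nhds_unique hu.norm (by simp [hu₁])
  have hyK : -y ∈ (1 + K).ker :=
    tendsto_nhds_unique (((1 + K).continuous.tendsto _).comp hu) hTu₀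
  have hy₀ : -y = 0 := (Submodule.disjoint_def.1 hMK) _ hyM hyK
  simp [hy₀] at hy₁

variable [CompleteSpace X]

theorem IsCompactOperator.isFredholm_one_add (hK : IsCompactOperator K) :
    (1 + K).IsFredholm := by
  have hker := hK.finiteDimensional_ker_one_add
  obtain ⟨M, hM, hcompl⟩ :=
    (Submodule.ClosedComplemented.of_finiteDimensional (1 + K).ker).exists_isClosed_isCompl
  have : M.CoFG := (Module.Finite.iff_fg.1 hker).cofg_of_isCompl hcompl
  have : CompleteSpace M := hM.completeSpace_coe
  obtain ⟨c, hc⟩ := hK.exists_antilipschitzWith_one_add_domRestrict hM hcompl.disjoint.symm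
  have hemb := hc.isClosedEmbedding ((1 + K).domRestrict M).uniformContinuous
  obtain ⟨hstrict, hrange⟩ := ((1 + K).isStrictMap_isClosed_range_iff_restrict M hM).2
    ⟨hemb.isEmbedding.isStrictMap, hemb.isClosed_range⟩
  have : IsClosed ((1 + K).range : Set X) := hrange
  exact ⟨hstrict, hrange, hker, hK.finiteDimensional_quotient_range_one_add,
    .of_finiteDimensional _⟩

open LinearMap.FiniteRangeSetoid in
theorem IsCompactOperator.exists_finiteDimensional_range_mul_one_add_sub_one
    (hK : IsCompactOperator K) :
    ∃ S : X →L[𝕜] X, FiniteDimensional 𝕜 (S * (1 + K) - 1).range := by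
  obtain ⟨S, hS, -⟩ := hK.isFredholm_one_add.exists_isQuasiInverse
  exact ⟨S, Module.Finite.iff_fg.2 (equiv_iff_hasFiniteRange.1 hS)⟩

end RCLike

theorem inverse_offdiagonal_in_ideal_of_fredholm_general (X : Type*) [NormedAddCommGroup X]
    [NormedSpace ℂ X] [CompleteSpace X]
    (J : Set (X →L[ℂ] X))
    (hJfin : ∀ T : X →L[ℂ] X,
      FiniteDimensional ℂ (LinearMap.range (T : X →ₗ[ℂ] X)) → T ∈ J)
    (hJadd : ∀ S ∈ J, ∀ T ∈ J, S + T ∈ J)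
    (hJideal : ∀ (S : X →L[ℂ] X), ∀ T ∈ J, S ∘L T ∈ J ∧ T ∘L S ∈ J)
    (P : X →L[ℂ] X) (hP : P ∘L P = P) (Q : X →L[ℂ] X) (hQ : Q = 1 - P)
    (A : X →L[ℂ] X) (B : X →L[ℂ] X) (hAB : A ∘L B = 1)
    (hPAQ : P ∘L A ∘L Q ∈ J)
    (R : X →L[ℂ] X)
    (hreg₁ : IsCompactOperator (R ∘L (P ∘L A ∘L P) - P)) :
    P ∘L B ∘L Q ∈ J := by
  simp only [← ContinuousLinearMap.mul_def] at hP hAB hPAQ hreg₁ ⊢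
  let I : TwoSidedIdeal (X →L[ℂ] X) := .mk' J
    (hJfin 0 (by rw [ContinuousLinearMap.toLinearMap_zero, LinearMap.range_zero]; infer_instance))
    (hJadd _ · _ ·) (fun hx => neg_one_mul (α := X →L[ℂ] X) _ ▸ (hJideal (-1) _ hx).1)
    (fun hy => (hJideal _ _ hy).1) (fun hx => (hJideal _ _ hx).2)
  have hI : ∀ T, T ∈ I ↔ T ∈ J := TwoSidedIdeal.mem_mk' _ _ _ _ _ _
  rw [← hI] at hPAQ ⊢
  obtain ⟨S, hS⟩ := hreg₁.exists_finiteDimensional_range_mul_one_add_sub_one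
  have hPP : ∀ T, P * (P * T) = P * T := fun T => by rw [← mul_assoc, hP]
  have hABT : ∀ T, A * (B * T) = T := fun T => by rw [← mul_assoc, hAB, one_mul]
  have hT : (1 + (R * (P * (A * P)) - P)) * (P * (B * Q)) =
      -(R * (P * (A * Q) * (B * Q))) := by
    subst hQ
    calc _ = R * (P * (A * P) * (P * (B * (1 - P)))) := by
          simp only [mul_sub, sub_mul, add_mul, one_mul, mul_one, mul_assoc, hPP]
          abel
      _ = _ := by
          simp only [mul_sub, sub_mul, mul_one, mul_assoc, hPP, hP, hABT, hAB, neg_sub]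
          abel
  refine TwoSidedIdeal.mem_of_mul_mem_of_mul_sub_one_mem ((hI _).2 (hJfin _ hS)) ?_
  rw [hT]
  exact I.neg_mem (I.mul_mem_left _ _ (I.mul_mem_right _ _ hPAQ))

/-- Let `X` be a Banach space, `P` a bounded projection with `Q = I - P`, and `J` a
two-sided ideal of `B(X)` with finite-rank ⊆ `J` ⊆ compact.  If `A` is invertible (with
inverse `B`), `P A Q ∈ J`, and the compression `P A P` restricted to the range of `P` is
Fredholm on `PX` (expressed, via Atkinson's theorem, by the existence of a regularizer
`R = P R P` with `R (PAP) - P` and `(PAP) R - P` compact), then `P B Q ∈ J`. -/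
theorem inverse_offdiagonal_in_ideal_of_fredholm (X : Type*) [NormedAddCommGroup X]
    [NormedSpace ℂ X] [CompleteSpace X]
    (J : Set (X →L[ℂ] X))
    (hJfin : ∀ T : X →L[ℂ] X,
      FiniteDimensional ℂ (LinearMap.range (T : X →ₗ[ℂ] X)) → T ∈ J)
    (hJcpt : ∀ T ∈ J, IsCompactOperator T)
    (hJadd : ∀ S ∈ J, ∀ T ∈ J, S + T ∈ J)
    (hJideal : ∀ (S : X →L[ℂ] X), ∀ T ∈ J, S ∘L T ∈ J ∧ T ∘L S ∈ J)
    (P : X →L[ℂ] X) (hP : P ∘L P = P) (Q : X →L[ℂ] X) (hQ : Q = 1 - P)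
    (A : X →L[ℂ] X) (B : X →L[ℂ] X) (hAB : A ∘L B = 1) (hBA : B ∘L A = 1)
    (hPAQ : P ∘L A ∘L Q ∈ J)
    (R : X →L[ℂ] X) (hR : R = P ∘L R ∘L P)
    (hreg₁ : IsCompactOperator (R ∘L (P ∘L A ∘L P) - P))
    (hreg₂ : IsCompactOperator ((P ∘L A ∘L P) ∘L R - P)) :
    P ∘L B ∘L Q ∈ J :=
  inverse_offdiagonal_in_ideal_of_fredholm_general X J hJfin hJadd hJideal P hP Q hQ A B hAB hPAQ R
    hreg₁
end

section
/- Let H be a separable Hilbert space, K ∈ C_m(H) for an integer m > 1 (Schatten class), and define R_m(K) := (I + K)·exp(Σ_{j=1}^{m−1} (−K)^j / j) − I. Then R_m(K) belongs to the trace class C₁(H). -/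
/-!
Along the segment `t ↦ t • K`, `d/dt R_m(tK) = K^m (-t)^(m-1) exp(∑_{j=1}^{m-1} (-tK)^j / j)`,
because `(1 + z) ∑_{i<m-1} (-z)^i = 1 - (-z)^(m-1)`. Integrating over `[0, 1]` gives
`R_m(K) = K^m B` with `B` bounded (computed in the commutative closed subalgebra generated by `K`,
where `exp` obeys the usual chain rule). Then `s_n(K^m B) ≤ s_{⌊n/m⌋}(K)^m ‖B‖` by
submultiplicativity of approximation numbers, and the right side is summable since each term of
`∑ s_n(K)^m` occurs `m` times.
-/

noncomputable section

def sVal {H : Type*} [NormedAddCommGroup H] [InnerProductSpace ℂ H]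
    (n : ℕ) (T : H →L[ℂ] H) : ℝ :=
  sInf {c : ℝ | ∃ F : H →L[ℂ] H,
    FiniteDimensional ℂ (LinearMap.range (F : H →ₗ[ℂ] H)) ∧
    Module.finrank ℂ (LinearMap.range (F : H →ₗ[ℂ] H)) ≤ n ∧ ‖T - F‖ ≤ c}

open NormedSpace Finset

def regularizedRemainder {A : Type*} [NormedRing A] [NormedAlgebra ℝ A] (m : ℕ) (x : A) : A :=
  (1 + x) * exp (∑ j ∈ Icc 1 (m - 1), (j : ℝ)⁻¹ • (-x) ^ j) - 1

@[simp]
theorem regularizedRemainder_zero {A : Type*} [NormedRing A] [NormedAlgebra ℝ A] (m : ℕ) :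
    regularizedRemainder m (0 : A) = 0 := by
  rw [regularizedRemainder, sum_eq_zero fun j hj => by
    rw [neg_zero, zero_pow (by grind), smul_zero]]
  simp

theorem map_regularizedRemainder {A B F : Type*} [NormedRing A] [NormedAlgebra ℝ A]
    [CompleteSpace A] [NormedRing B] [NormedAlgebra ℝ B] [FunLike F A B] [AlgHomClass F ℝ A B]
    (φ : F) (hφ : Continuous φ) (m : ℕ) (x : A) :
    φ (regularizedRemainder m x) = regularizedRemainder m (φ x) := by
  have hball : ∀ y : A, y ∈ Metric.eball 0 (expSeries ℝ A).radius := fun y => by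
    simp [expSeries_radius_eq_top]
  simp [regularizedRemainder, map_exp_of_mem_ball φ hφ _ (hball _)]

theorem sub_eq_mul_intervalIntegral_of_hasDerivAt {A : Type*} [NormedRing A]
    [NormedAlgebra ℝ A] [CompleteSpace A] {f g : ℝ → A} {a b : ℝ} (c : A)
    (hf : ∀ t ∈ Set.uIcc a b, HasDerivAt f (c * g t) t)
    (hg : IntervalIntegrable g MeasureTheory.volume a b) :
    f b - f a = c * ∫ t in a..b, g t := by
  rw [← intervalIntegral.integral_eq_sub_of_hasDerivAt hf (hg.const_mul c)]
  exact (ContinuousLinearMap.mul ℝ A c).intervalIntegral_comp_comm hg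

section Commutative

variable {A : Type*} [NormedCommRing A] [NormedAlgebra ℝ A]

theorem HasDerivAt.sum_inv_smul_pow {f : ℝ → A} {f' : A} {t : ℝ} (hf : HasDerivAt f f' t)
    (n : ℕ) :
    HasDerivAt (fun s => ∑ j ∈ Icc 1 n, (j : ℝ)⁻¹ • f s ^ j)
      ((∑ i ∈ range n, f t ^ i) * f') t := by
  refine (HasDerivAt.fun_sum fun j (_ : j ∈ Icc 1 n) =>
    (hf.fun_pow j).const_smul (j : ℝ)⁻¹).congr_deriv ?_
  induction n with
  | zero => simp
  | succ n ih =>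
    rw [sum_range_succ, sum_Icc_succ_top (by omega), ih, add_mul, Nat.add_sub_cancel,
      mul_assoc, ← nsmul_eq_mul, ← Nat.cast_smul_eq_nsmul ℝ, smul_smul,
      inv_mul_cancel₀ (by positivity), one_smul]

variable [CompleteSpace A]

theorem hasDerivAt_regularizedRemainder_smul {m : ℕ} (hm : m ≠ 0) (x : A) (t : ℝ) :
    HasDerivAt (fun s : ℝ => regularizedRemainder m (s • x))
      (x ^ m * ((-t) ^ (m - 1) •
        exp (∑ j ∈ Icc 1 (m - 1), (j : ℝ)⁻¹ • (-(t • x)) ^ j))) t := by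
  obtain ⟨n, rfl⟩ := Nat.exists_eq_succ_of_ne_zero hm
  have hy : HasDerivAt (fun s : ℝ => -(s • x)) (-x) t := by
    simpa using ((hasDerivAt_id t).smul_const x).fun_neg
  have hE := (hasFDerivAt_exp (𝕂 := ℝ)).comp_hasDerivAt t (hy.sum_inv_smul_pow n)
  have hlin : HasDerivAt (fun s : ℝ => 1 + s • x) x t := by
    simpa using ((hasDerivAt_id t).smul_const x).const_add 1
  refine ((hlin.mul hE).sub_const 1).congr_deriv ?_
  set E := exp (∑ j ∈ Icc 1 n, (j : ℝ)⁻¹ • (-(t • x)) ^ j)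
  set G := ∑ i ∈ range n, (-(t • x)) ^ i
  have hgeom : (1 + t • x) * G = 1 - (-t) ^ n • x ^ n := by
    rw [← sub_neg_eq_add, mul_neg_geom_sum, ← smul_pow, neg_smul]
  simp only [smul_apply, one_apply_eq_self, smul_eq_mul]
  calc x * E + (1 + t • x) * (E * (G * -x)) = x * E * (1 - (1 + t • x) * G) := by ring
    _ = x ^ (n + 1) * ((-t) ^ n • E) := by
      rw [hgeom, sub_sub_cancel, mul_smul_comm, mul_smul_comm, pow_succ', mul_right_comm]

theorem exists_regularizedRemainder_eq_pow_mul_of_comm {m : ℕ} (hm : m ≠ 0) (x : A) :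
    ∃ b, regularizedRemainder m x = x ^ m * b := by
  set E : ℝ → A := fun t => exp (∑ j ∈ Icc 1 (m - 1), (j : ℝ)⁻¹ • (-(t • x)) ^ j)
  have hE : Continuous E := continuous_iff_continuousAt.2 fun t =>
    ((hasFDerivAt_exp (𝕂 := ℝ)).comp_hasDerivAt t
      ((((hasDerivAt_id t).smul_const x).fun_neg).sum_inv_smul_pow _)).continuousAt
  have h := sub_eq_mul_intervalIntegral_of_hasDerivAt (a := 0) (b := 1) (x ^ m)
    (fun t _ => hasDerivAt_regularizedRemainder_smul hm x t)
    ((by fun_prop : Continuous fun t : ℝ => (-t) ^ (m - 1) • E t).intervalIntegrable 0 1)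
  rw [one_smul, zero_smul, regularizedRemainder_zero, sub_zero] at h
  exact ⟨_, h⟩

end Commutative

theorem exists_regularizedRemainder_eq_pow_mul {A : Type*} [NormedRing A] [NormedAlgebra ℝ A]
    [CompleteSpace A] {m : ℕ} (hm : m ≠ 0) (x : A) :
    ∃ b, regularizedRemainder m x = x ^ m * b := by
  let : NormedCommRing (Algebra.elemental ℝ x) :=
    { SubringClass.toNormedRing (Algebra.elemental ℝ x) with mul_comm := mul_comm }
  obtain ⟨b, hb⟩ := exists_regularizedRemainder_eq_pow_mul_of_comm hm
    (⟨x, Algebra.elemental.self_mem ℝ x⟩ : Algebra.elemental ℝ x)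
  have h := congrArg (Algebra.elemental ℝ x).val hb
  rw [map_regularizedRemainder _ continuous_subtype_val, map_mul, map_pow] at h
  exact ⟨b, h⟩

section SingularValues

variable {H : Type*} [NormedAddCommGroup H] [InnerProductSpace ℂ H]

theorem finiteDimensional_and_finrank_le_iff_rank_le {K V : Type*} [DivisionRing K]
    [AddCommGroup V] [Module K V] (n : ℕ) :
    FiniteDimensional K V ∧ Module.finrank K V ≤ n ↔ Module.rank K V ≤ n := by
  refine ⟨fun ⟨_, h⟩ => ?_, fun h => ⟨?_, Module.finrank_le_of_rank_le h⟩⟩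
  · rw [← Module.finrank_eq_rank]
    exact_mod_cast h
  · exact Module.rank_lt_aleph0_iff.mp (h.trans_lt Cardinal.natCast_lt_aleph0)

theorem sVal_eq_sInf_rank (n : ℕ) (T : H →L[ℂ] H) :
    sVal n T =
      sInf {c : ℝ | ∃ F : H →L[ℂ] H, (F : H →ₗ[ℂ] H).rank ≤ n ∧ ‖T - F‖ ≤ c} := by
  simp only [sVal, ← and_assoc, finiteDimensional_and_finrank_le_iff_rank_le]

theorem sVal_nonneg (n : ℕ) (T : H →L[ℂ] H) : 0 ≤ sVal n T := by
  rw [sVal_eq_sInf_rank]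
  exact Real.sInf_nonneg fun _ ⟨_, _, h⟩ => (norm_nonneg _).trans h

theorem sVal_le_norm_sub {n : ℕ} (T : H →L[ℂ] H) {F : H →L[ℂ] H}
    (hF : (F : H →ₗ[ℂ] H).rank ≤ n) : sVal n T ≤ ‖T - F‖ := by
  rw [sVal_eq_sInf_rank]
  exact csInf_le ⟨0, fun _ ⟨_, _, h⟩ => (norm_nonneg _).trans h⟩ ⟨F, hF, le_rfl⟩

theorem le_sVal_mul_of_forall {n : ℕ} {T : H →L[ℂ] H} {x a : ℝ} (ha : 0 ≤ a)
    (h : ∀ F : H →L[ℂ] H, (F : H →ₗ[ℂ] H).rank ≤ n → x ≤ ‖T - F‖ * a) :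
    x ≤ sVal n T * a := by
  rw [sVal_eq_sInf_rank, mul_comm, ← smul_eq_mul, ← Real.sInf_smul_of_nonneg ha]
  refine le_csInf ⟨a • ‖T‖, ⟨_, ⟨0, by simp, by simp⟩, rfl⟩⟩ ?_
  rintro _ ⟨c, ⟨F, hF, hc⟩, rfl⟩
  calc x ≤ ‖T - F‖ * a := h F hF
    _ ≤ a • c := by rw [smul_eq_mul, mul_comm]; gcongr

theorem sVal_le_norm (n : ℕ) (T : H →L[ℂ] H) : sVal n T ≤ ‖T‖ := by
  simpa using sVal_le_norm_sub (n := n) T (F := 0) (by simp)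

theorem sVal_antitone (T : H →L[ℂ] H) : Antitone fun n => sVal n T := fun n n' hn => by
  simpa using le_sVal_mul_of_forall zero_le_one fun F hF => by
    simpa using sVal_le_norm_sub T (hF.trans (by exact_mod_cast hn))

theorem rank_mul_add_mul_le (F B C G : H →L[ℂ] H) :
    ((F * B + C * G : H →L[ℂ] H) : H →ₗ[ℂ] H).rank ≤
      (F : H →ₗ[ℂ] H).rank + (G : H →ₗ[ℂ] H).rank :=
  (LinearMap.rank_add_le _ _).trans
    (add_le_add (LinearMap.rank_comp_le_left _ _) (LinearMap.rank_comp_le_right _ _))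

theorem sVal_add_mul_le (j k : ℕ) (A B : H →L[ℂ] H) :
    sVal (j + k) (A * B) ≤ sVal j A * sVal k B := by
  refine le_sVal_mul_of_forall (sVal_nonneg k B) fun F hF => ?_
  rw [mul_comm]
  refine le_sVal_mul_of_forall (norm_nonneg _) fun G hG => ?_
  calc sVal (j + k) (A * B) ≤ ‖A * B - (F * B + (A - F) * G)‖ :=
        sVal_le_norm_sub _ ((rank_mul_add_mul_le F B (A - F) G).trans
          (by push_cast; exact add_le_add hF hG))
    _ = ‖(A - F) * (B - G)‖ := by congr 1; noncomm_ring
    _ ≤ ‖B - G‖ * ‖A - F‖ := (norm_mul_le _ _).trans_eq (mul_comm _ _)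

theorem sVal_pow_le (m q : ℕ) (K : H →L[ℂ] H) : sVal (m * q) (K ^ m) ≤ sVal q K ^ m := by
  induction m with
  | zero => simpa using (sVal_le_norm 0 1).trans ContinuousLinearMap.norm_id_le
  | succ m ih =>
    calc sVal ((m + 1) * q) (K ^ (m + 1)) = sVal (q + m * q) (K * K ^ m) := by
          rw [pow_succ', add_mul, one_mul, add_comm]
      _ ≤ sVal q K * sVal (m * q) (K ^ m) := sVal_add_mul_le _ _ _ _
      _ ≤ sVal q K ^ (m + 1) := by
          rw [pow_succ']
          gcongr
          exact sVal_nonneg q K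

theorem sVal_pow_mul_le (n m : ℕ) (K B : H →L[ℂ] H) :
    sVal n (K ^ m * B) ≤ sVal (n / m) K ^ m * ‖B‖ :=
  calc sVal n (K ^ m * B) ≤ sVal (m * (n / m) + 0) (K ^ m * B) :=
        sVal_antitone _ (Nat.mul_div_le n m)
    _ ≤ sVal (m * (n / m)) (K ^ m) * sVal 0 B := sVal_add_mul_le _ _ _ _
    _ ≤ sVal (n / m) K ^ m * ‖B‖ :=
        mul_le_mul (sVal_pow_le _ _ _) (sVal_le_norm _ _) (sVal_nonneg _ _)
          (pow_nonneg (sVal_nonneg _ _) _)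

theorem Summable.comp_div_of_nonneg {f : ℕ → ℝ} (hf : Summable f) (hf0 : 0 ≤ f) {m : ℕ}
    (hm : m ≠ 0) : Summable fun n => f (n / m) := by
  have : NeZero m := ⟨hm⟩
  have hprod : Summable fun p : ℕ × Fin m => f p.1 := by
    simpa using hf.mul_of_nonneg (Summable.of_finite (f := fun _ : Fin m => (1 : ℝ))) hf0
      fun _ => zero_le_one
  exact (Nat.divModEquiv m).summable_iff.mpr hprod

theorem summable_sVal_pow_mul {m : ℕ} (hm : m ≠ 0) {K : H →L[ℂ] H}
    (hK : Summable fun n => sVal n K ^ m) (B : H →L[ℂ] H) :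
    Summable fun n => sVal n (K ^ m * B) :=
  ((hK.comp_div_of_nonneg (fun n => pow_nonneg (sVal_nonneg n K) m) hm).mul_right
    ‖B‖).of_nonneg_of_le (fun n => sVal_nonneg n _) fun n => sVal_pow_mul_le n m K B

end SingularValues

/-- If `K` belongs to the Schatten class `C_m(H)` for an integer `m > 1`, then
`R_m(K) = (I + K) exp(∑_{j=1}^{m−1} (−K)^j / j) − I` is of trace class. -/
theorem regularized_remainder_traceClass {H : Type*} [NormedAddCommGroup H]
    [InnerProductSpace ℂ H] [CompleteSpace H]
    (m : ℕ) (hm : 1 < m) (K : H →L[ℂ] H)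
    (hK : Summable fun n : ℕ => (sVal n K) ^ (m : ℝ)) :
    Summable fun n : ℕ =>
      sVal n ((1 + K) * NormedSpace.exp
        (∑ j ∈ Finset.Icc 1 (m - 1), ((j : ℂ))⁻¹ • (-K) ^ j) - 1) := by
  have hR : (1 + K) * exp (∑ j ∈ Icc 1 (m - 1), ((j : ℂ))⁻¹ • (-K) ^ j) - 1 =
      regularizedRemainder m K := by
    simp only [regularizedRemainder, ← Complex.coe_smul, Complex.ofReal_inv,
      Complex.ofReal_natCast]
  have hm0 : m ≠ 0 := by omega
  obtain ⟨B, hB⟩ := exists_regularizedRemainder_eq_pow_mul hm0 K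
  rw [hR, hB]
  exact summable_sVal_pow_mul hm0 (by simpa only [Real.rpow_natCast] using hK) B

end
end
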